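/- arXiv:1704.00805 — 7 statements merged into one kernel-verified Lean document; each statement's English description precedes it below -/
import Mathlib

section
/- For every λ > 0, the softmax function is λ-Lipschitz with respect to the Euclidean norm: for all z, z′ ∈ ℝⁿ, ‖σ(z) − σ(z′)‖₂ ≤ λ ‖z − z′‖₂. -/
open Real BigOperators
open scoped RealInnerProductSpace

/-- The softmax function with inverse temperature `lam`,
`softmax lam z i = exp (lam * z i) / ∑ j, exp (lam * z j)`. -/
noncomputable def softmax {n : ℕ} (lam : ℝ) (z : EuclideanSpace ℝ (Fin n)) :
    EuclideanSpace ℝ (Fin n) :=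
  (WithLp.equiv 2 (Fin n → ℝ)).symm
    (fun i => Real.exp (lam * z i) / ∑ j, Real.exp (lam * z j))

/-- The Jacobian of softmax (on plain pi type), as a continuous linear map:
`v ↦ fun i => lam * (p i * (v i - ∑ j, p j * v j))`. -/
noncomputable def smD {n : ℕ} (lam : ℝ) (p : Fin n → ℝ) : (Fin n → ℝ) →L[ℝ] (Fin n → ℝ) :=
  LinearMap.toContinuousLinearMap
  { toFun := fun v i => lam * (p i * (v i - ∑ j, p j * v j))
    map_add' := by
      intro v w
      funext i
      simp only [Pi.add_apply, mul_add, Finset.sum_add_distrib]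
      ring
    map_smul' := by
      intro c v
      funext i
      have h : ∑ j, p j * (c * v j) = c * ∑ j, p j * v j := by
        rw [Finset.mul_sum]; exact Finset.sum_congr rfl fun j _ => by ring
      simp only [Pi.smul_apply, smul_eq_mul, RingHom.id_apply, h]
      ring }

@[simp] lemma smD_apply {n : ℕ} (lam : ℝ) (p : Fin n → ℝ) (v : Fin n → ℝ) (i : Fin n) :
    smD lam p v i = lam * (p i * (v i - ∑ j, p j * v j)) := rfl

/-- The softmax-like function on the plain pi type. -/
noncomputable def smF {n : ℕ} (lam : ℝ) (x : Fin n → ℝ) : Fin n → ℝ :=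
  fun i => Real.exp (lam * x i) / ∑ j, Real.exp (lam * x j)

lemma smF_hasFDerivAt {n : ℕ} (hn : 1 ≤ n) (lam : ℝ) (y : Fin n → ℝ) :
    HasFDerivAt (smF lam) (smD lam (smF lam y)) y := by
  have hne : Nonempty (Fin n) := Fin.pos_iff_nonempty.mp hn
  set S : ℝ := ∑ j, Real.exp (lam * y j) with hS_def
  have hS : 0 < S := Finset.sum_pos (fun j _ => Real.exp_pos _) Finset.univ_nonempty
  apply hasFDerivAt_pi''
  intro i
  have hnum : ∀ k : Fin n, HasFDerivAt (fun x : Fin n → ℝ => Real.exp (lam * x k))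
      (Real.exp (lam * y k) • (lam • (ContinuousLinearMap.proj k : (Fin n → ℝ) →L[ℝ] ℝ))) y := by
    intro k
    have h0 : HasFDerivAt (fun x : Fin n → ℝ => lam * x k)
        (lam • (ContinuousLinearMap.proj k : (Fin n → ℝ) →L[ℝ] ℝ)) y :=
      (ContinuousLinearMap.proj k : (Fin n → ℝ) →L[ℝ] ℝ).hasFDerivAt.const_mul lam
    exact h0.exp
  have hden : HasFDerivAt (fun x : Fin n → ℝ => ∑ j, Real.exp (lam * x j))
      (∑ j, Real.exp (lam * y j) • (lam • (ContinuousLinearMap.proj j : (Fin n → ℝ) →L[ℝ] ℝ))) y :=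
    HasFDerivAt.fun_sum (fun j _ => hnum j)
  have hinv : HasFDerivAt (fun x : Fin n → ℝ => (∑ j, Real.exp (lam * x j))⁻¹)
      ((-(S ^ 2)⁻¹) • (∑ j, Real.exp (lam * y j) • (lam • (ContinuousLinearMap.proj j : (Fin n → ℝ) →L[ℝ] ℝ)))) y :=
    (hasDerivAt_inv hS.ne').comp_hasFDerivAt y hden
  have h := (hnum i).mul hinv
  have hgoal : (fun x : Fin n → ℝ => smF lam x i)
      = fun x => Real.exp (lam * x i) * (∑ j, Real.exp (lam * x j))⁻¹ := by
    funext x; simp [smF, div_eq_mul_inv]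
  rw [hgoal]
  convert h using 1
  · rfl
  · rfl
  ext v
  simp only [ContinuousLinearMap.comp_apply, ContinuousLinearMap.proj_apply,
    ContinuousLinearMap.add_apply, ContinuousLinearMap.smul_apply,
    ContinuousLinearMap.coe_sum', Finset.sum_apply, smul_eq_mul, smD_apply, smF]
  simp only [← hS_def]
  have hsum1 : ∑ j, Real.exp (lam * y j) / S * v j = (∑ j, Real.exp (lam * y j) * v j) / S := by
    rw [Finset.sum_div]; exact Finset.sum_congr rfl fun j _ => by ring
  have hsum2 : ∑ j, Real.exp (lam * y j) * (lam * v j) = lam * ∑ j, Real.exp (lam * y j) * v j := by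
    rw [Finset.mul_sum]; exact Finset.sum_congr rfl fun j _ => by ring
  rw [hsum1, hsum2]
  field_simp
  ring

/-- The softmax function is `λ`-Lipschitz with respect to the Euclidean norm. -/
theorem softmax_lipschitz (n : ℕ) (hn : 1 ≤ n) (lam : ℝ) (hlam : 0 < lam)
    (z z' : EuclideanSpace ℝ (Fin n)) :
    ‖softmax lam z - softmax lam z'‖ ≤ lam * ‖z - z'‖ := by
  have hne : Nonempty (Fin n) := Fin.pos_iff_nonempty.mp hn
  set e : EuclideanSpace ℝ (Fin n) ≃L[ℝ] (Fin n → ℝ) :=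
    PiLp.continuousLinearEquiv 2 ℝ (fun _ : Fin n => ℝ) with he
  -- the derivative of softmax at x
  set D : EuclideanSpace ℝ (Fin n) → (EuclideanSpace ℝ (Fin n) →L[ℝ] EuclideanSpace ℝ (Fin n)) :=
    fun x => (e.symm : (Fin n → ℝ) →L[ℝ] EuclideanSpace ℝ (Fin n)).comp
      ((smD lam (smF lam (e x))).comp (e : EuclideanSpace ℝ (Fin n) →L[ℝ] (Fin n → ℝ))) with hD
  have hderiv : ∀ x : EuclideanSpace ℝ (Fin n), HasFDerivAt (softmax lam) (D x) x := by
    intro x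
    have h1 : HasFDerivAt (smF lam) (smD lam (smF lam (e x))) (e x) := smF_hasFDerivAt hn lam _
    have h2 : HasFDerivAt (fun x : EuclideanSpace ℝ (Fin n) => e.symm (smF lam (e x))) (D x) x := by
      exact (e.symm.hasFDerivAt.comp _ (h1.comp x (e.hasFDerivAt)))
    exact h2
  -- facts about p = smF lam (e x)
  have hp_facts : ∀ x : EuclideanSpace ℝ (Fin n),
      (∀ i, 0 < smF lam (e x) i) ∧ (∑ i, smF lam (e x) i = 1) := by
    intro x
    have hS : 0 < ∑ j, Real.exp (lam * (e x) j) :=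
      Finset.sum_pos (fun j _ => Real.exp_pos _) Finset.univ_nonempty
    constructor
    · intro i; exact div_pos (Real.exp_pos _) hS
    · have : (∑ i, smF lam (e x) i)
          = (∑ i, Real.exp (lam * (e x) i)) / (∑ j, Real.exp (lam * (e x) j)) := by
        simp only [smF]
        rw [Finset.sum_div]
      rw [this]
      exact div_self hS.ne'
  have hbound : ∀ x : EuclideanSpace ℝ (Fin n), ‖D x‖ ≤ lam := by
    intro x
    obtain ⟨hp0, hp1⟩ := hp_facts x
    set p : Fin n → ℝ := smF lam (e x) with hp
    have hple : ∀ i, p i ≤ 1 := by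
      intro i
      calc p i ≤ ∑ j, p j :=
        Finset.single_le_sum (fun j _ => (hp0 j).le) (Finset.mem_univ i)
      _ = 1 := hp1
    apply ContinuousLinearMap.opNorm_le_bound _ hlam.le
    intro v
    set m : ℝ := ∑ j, p j * v j with hm
    have hDv : ∀ i, (D x v : EuclideanSpace ℝ (Fin n)) i = lam * (p i * (v i - m)) := by
      intro i
      rfl
    rw [show ‖D x v‖ = Real.sqrt (∑ i, (lam * (p i * (v i - m)))^2) by
      rw [EuclideanSpace.norm_eq]
      congr 1
      exact Finset.sum_congr rfl fun i _ => by rw [hDv i, Real.norm_eq_abs, sq_abs]]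
    rw [show ‖v‖ = Real.sqrt (∑ i, (v i)^2) by
      rw [EuclideanSpace.norm_eq]
      congr 1
      exact Finset.sum_congr rfl fun i _ => by rw [Real.norm_eq_abs, sq_abs]]
    rw [show lam * Real.sqrt (∑ i, (v i)^2) = Real.sqrt (lam^2 * ∑ i, (v i)^2) by
      rw [Real.sqrt_mul (sq_nonneg lam), Real.sqrt_sq hlam.le]]
    apply Real.sqrt_le_sqrt
    have key : ∑ i, p i ^ 2 * (v i - m)^2 ≤ ∑ i, (v i)^2 := by
      have step1 : ∑ i, p i ^ 2 * (v i - m)^2 ≤ ∑ i, p i * (v i - m)^2 := by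
        apply Finset.sum_le_sum
        intro i _
        have : p i ^ 2 ≤ p i := by nlinarith [hp0 i, hple i]
        exact mul_le_mul_of_nonneg_right this (sq_nonneg _)
      have step2 : ∑ i, p i * (v i - m)^2 = (∑ i, p i * (v i)^2) - m^2 := by
        have expand : ∀ i ∈ Finset.univ, p i * (v i - m)^2
            = p i * (v i)^2 - 2*m*(p i * v i) + m^2 * p i := fun i _ => by ring
        rw [Finset.sum_congr rfl expand, Finset.sum_add_distrib, Finset.sum_sub_distrib,
          ← Finset.mul_sum, ← Finset.mul_sum, hp1, ← hm]
        ring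
      have step3 : ∑ i, p i * (v i)^2 ≤ ∑ i, (v i)^2 := by
        apply Finset.sum_le_sum
        intro i _
        nlinarith [hp0 i, hple i, sq_nonneg (v i)]
      nlinarith [sq_nonneg m]
    calc ∑ i, (lam * (p i * (v i - m)))^2 = lam^2 * ∑ i, p i ^2 * (v i - m)^2 := by
          rw [Finset.mul_sum]; exact Finset.sum_congr rfl fun i _ => by ring
      _ ≤ lam^2 * ∑ i, (v i)^2 := by
          exact mul_le_mul_of_nonneg_left key (sq_nonneg lam)
  have hsm : softmax lam = fun x => e.symm (smF lam (e x)) := rfl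
  exact convex_univ.norm_image_sub_le_of_norm_hasFDerivWithin_le
    (fun x _ => (hderiv x).hasFDerivWithinAt) (fun x _ => hbound x)
    (Set.mem_univ z') (Set.mem_univ z)
end

section
/- For every λ > 0, the softmax function is (1/λ)-co-coercive with respect to the Euclidean norm: for all z, z′ ∈ ℝⁿ, ⟨σ(z) − σ(z′), z − z′⟩ ≥ (1/λ) ‖σ(z) − σ(z′)‖₂². -/
open Real BigOperators
open scoped RealInnerProductSpace
open Finset

/-- Both first-order bounds for log-sum-exp: the convexity lower bound and the
1-smoothness (descent) upper bound. -/
lemma lse_bounds {n : ℕ} (hn : 0 < n) (a b : Fin n → ℝ) :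
    Real.log (∑ i, Real.exp (a i)) + (∑ i, (Real.exp (a i) / ∑ j, Real.exp (a j)) * (b i - a i))
      ≤ Real.log (∑ i, Real.exp (b i)) ∧
    Real.log (∑ i, Real.exp (b i))
      ≤ Real.log (∑ i, Real.exp (a i))
        + (∑ i, (Real.exp (a i) / ∑ j, Real.exp (a j)) * (b i - a i))
        + (1/2) * ∑ i, (b i - a i)^2 := by
  haveI : Nonempty (Fin n) := Fin.pos_iff_nonempty.mp hn
  set c : Fin n → ℝ := fun i => b i - a i with hc
  set S : ℝ → ℝ := fun t => ∑ i, Real.exp (a i + t * c i) with hSdef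
  set S1 : ℝ → ℝ := fun t => ∑ i, c i * Real.exp (a i + t * c i) with hS1def
  set S2 : ℝ → ℝ := fun t => ∑ i, c i * (c i * Real.exp (a i + t * c i)) with hS2def
  set K : ℝ := ∑ i, (c i)^2 with hK
  have hSpos : ∀ t, 0 < S t := fun t =>
    Finset.sum_pos (fun i _ => Real.exp_pos _) Finset.univ_nonempty
  have hderiv_term : ∀ (i : Fin n) (t : ℝ),
      HasDerivAt (fun t => Real.exp (a i + t * c i)) (c i * Real.exp (a i + t * c i)) t := by
    intro i t
    have h : HasDerivAt (fun t : ℝ => a i + t * c i) (c i) t :=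
      (hasDerivAt_mul_const (c i)).const_add (a i)
    simpa [mul_comm] using h.exp
  have hS : ∀ t, HasDerivAt S (S1 t) t := fun t =>
    HasDerivAt.fun_sum (fun i _ => hderiv_term i t)
  have hS1 : ∀ t, HasDerivAt S1 (S2 t) t := fun t =>
    HasDerivAt.fun_sum (fun i _ => (hderiv_term i t).const_mul (c i))
  set φ : ℝ → ℝ := fun t => Real.log (S t) with hφdef
  set φd : ℝ → ℝ := fun t => S1 t / S t with hφddef
  have hφ : ∀ t, HasDerivAt φ (φd t) t := fun t => (hS t).log (hSpos t).ne'
  have hφd : ∀ t, HasDerivAt φd ((S2 t * S t - S1 t * S1 t) / (S t)^2) t := fun t =>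
    (hS1 t).div (hS t) (hSpos t).ne'
  -- second derivative bounds
  have hsec_lo : ∀ t, 0 ≤ (S2 t * S t - S1 t * S1 t) / (S t)^2 := by
    intro t
    apply div_nonneg _ (sq_nonneg _)
    rw [sub_nonneg]
    have key := Finset.sum_mul_sq_le_sq_mul_sq Finset.univ
      (fun i => c i * Real.sqrt (Real.exp (a i + t * c i)))
      (fun i => Real.sqrt (Real.exp (a i + t * c i)))
    have heq : ∀ i : Fin n,
        Real.sqrt (Real.exp (a i + t * c i)) * Real.sqrt (Real.exp (a i + t * c i))
          = Real.exp (a i + t * c i) := fun i =>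
      Real.mul_self_sqrt (Real.exp_pos _).le
    have h2 : (∑ i, (c i * Real.sqrt (Real.exp (a i + t * c i)))
        * Real.sqrt (Real.exp (a i + t * c i))) = S1 t := by
      apply Finset.sum_congr rfl; intro i _
      rw [mul_assoc, heq i]
    have h3 : (∑ i, (c i * Real.sqrt (Real.exp (a i + t * c i)))^2) = S2 t := by
      apply Finset.sum_congr rfl; intro i _
      rw [mul_pow, sq, sq, heq i, ← mul_assoc]
    have h4 : (∑ i, (Real.sqrt (Real.exp (a i + t * c i)))^2) = S t := by
      apply Finset.sum_congr rfl; intro i _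
      rw [sq, heq i]
    rw [h2, h3, h4] at key
    calc S1 t * S1 t = (S1 t)^2 := (sq (S1 t)).symm
      _ ≤ S2 t * S t := key
  have hsec_hi : ∀ t, (S2 t * S t - S1 t * S1 t) / (S t)^2 ≤ K := by
    intro t
    rw [div_le_iff₀ (by positivity)]
    have h1 : S2 t ≤ K * S t := by
      calc S2 t ≤ ∑ i, (c i)^2 * S t := by
            apply Finset.sum_le_sum; intro i _
            rw [← mul_assoc, ← sq]
            exact mul_le_mul_of_nonneg_left
              (Finset.single_le_sum (f := fun j => Real.exp (a j + t * c j))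
                (fun j _ => (Real.exp_pos _).le) (Finset.mem_univ i))
              (sq_nonneg _)
        _ = K * S t := by rw [← Finset.sum_mul]
    nlinarith [sq_nonneg (S1 t), hSpos t,
      mul_le_mul_of_nonneg_right h1 (hSpos t).le]
  -- φd is monotone (convexity of φ)
  have hφd_mono : Monotone φd :=
    monotone_of_hasDerivAt_nonneg hφd hsec_lo
  have hlin : ∀ (r : ℝ) (t : ℝ), HasDerivAt (fun t : ℝ => r * t) r t := by
    intro r t
    simpa using (hasDerivAt_id t).const_mul r
  -- lower bound at t = 1
  have hlow : φ 0 + φd 0 ≤ φ 1 := by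
    set ψ : ℝ → ℝ := fun t => φ t - φd 0 * t with hψdef
    have hψ : ∀ t, HasDerivAt ψ (φd t - φd 0) t := fun t => (hφ t).sub (hlin (φd 0) t)
    have hmono : MonotoneOn ψ (Set.Ici (0:ℝ)) := by
      apply monotoneOn_of_hasDerivWithinAt_nonneg (convex_Ici 0)
        (fun t _ => ((hψ t).continuousAt.continuousWithinAt))
        (fun t ht => (hψ t).hasDerivWithinAt)
      intro t ht
      rw [interior_Ici] at ht
      have := hφd_mono (le_of_lt ht)
      linarith
    have h01 := hmono (Set.self_mem_Ici) (by norm_num : (1:ℝ) ∈ Set.Ici (0:ℝ)) zero_le_one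
    simp only [hψdef, mul_zero, mul_one, sub_zero] at h01
    linarith
  -- upper bound at t = 1
  have hhigh : φ 1 ≤ φ 0 + φd 0 + K / 2 := by
    set χ : ℝ → ℝ := fun t => φd 0 + K * t - φd t with hχdef
    have hχ : ∀ t, HasDerivAt χ (K - (S2 t * S t - S1 t * S1 t) / (S t)^2) t := fun t =>
      (((hlin K t).const_add (φd 0)).sub (hφd t))
    have hχmono : Monotone χ :=
      monotone_of_hasDerivAt_nonneg hχ (fun t => by have := hsec_hi t; dsimp; linarith)
    have hχnonneg : ∀ t, 0 ≤ t → 0 ≤ χ t := by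
      intro t ht
      have := hχmono ht
      simpa [hχdef] using this
    set ψ : ℝ → ℝ := fun t => φ 0 + φd 0 * t + K * t^2 / 2 - φ t with hψdef
    have hψ : ∀ t, HasDerivAt ψ (χ t) t := by
      intro t
      have hq : HasDerivAt (fun t : ℝ => K * t^2 / 2) (K * t) t := by
        have := ((hasDerivAt_pow 2 t).const_mul K).div_const 2
        simpa using this.congr_deriv (by ring)
      have := (((hlin (φd 0) t).const_add (φ 0)).add hq).sub (hφ t)
      exact this
    have hmono : MonotoneOn ψ (Set.Ici (0:ℝ)) := by
      apply monotoneOn_of_hasDerivWithinAt_nonneg (convex_Ici 0)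
        (fun t _ => ((hψ t).continuousAt.continuousWithinAt))
        (fun t ht => (hψ t).hasDerivWithinAt)
      intro t ht
      rw [interior_Ici] at ht
      exact hχnonneg t ht.le
    have h01 := hmono (Set.self_mem_Ici) (by norm_num : (1:ℝ) ∈ Set.Ici (0:ℝ)) zero_le_one
    simp only [hψdef, mul_zero, mul_one, sub_zero] at h01
    have h00 : φ 0 + φd 0 * 0 + K * 0^2/2 - φ 0 = 0 := by ring
    nlinarith [h01]
  -- translate back
  have hφ0 : φ 0 = Real.log (∑ i, Real.exp (a i)) := by
    simp [hφdef, hSdef]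
  have hφ1 : φ 1 = Real.log (∑ i, Real.exp (b i)) := by
    simp [hφdef, hSdef, hc]
  have hφd0 : φd 0 = ∑ i, (Real.exp (a i) / ∑ j, Real.exp (a j)) * (b i - a i) := by
    simp only [hφddef, hS1def, hSdef, zero_mul, add_zero]
    rw [Finset.sum_div]
    apply Finset.sum_congr rfl
    intro i _
    rw [hc]
    ring
  constructor
  · rw [← hφ0, ← hφ1, ← hφd0]; exact hlow
  · rw [← hφ0, ← hφ1, ← hφd0]
    linarith [hhigh]

/-- Softmax on plain functions, inverse temperature 1. -/
noncomputable def smax {n : ℕ} (a : Fin n → ℝ) : Fin n → ℝ :=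
  fun i => Real.exp (a i) / ∑ j, Real.exp (a j)

/-- Bregman-divergence lower bound for log-sum-exp. -/
lemma lse_bregman {n : ℕ} (hn : 0 < n) (a b : Fin n → ℝ) :
    (1/2) * ∑ i, (smax b i - smax a i)^2
      ≤ Real.log (∑ i, Real.exp (b i)) - Real.log (∑ i, Real.exp (a i))
        - ∑ i, smax a i * (b i - a i) := by
  set g : Fin n → ℝ := fun i => smax b i - smax a i with hg
  set w : Fin n → ℝ := fun i => b i - g i with hw
  have h1 := (lse_bounds hn a w).1
  have h2 := (lse_bounds hn b w).2
  have e1 : (∑ i, (Real.exp (a i) / ∑ j, Real.exp (a j)) * (w i - a i))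
      = (∑ i, smax a i * (b i - a i)) - ∑ i, smax a i * g i := by
    rw [← Finset.sum_sub_distrib]
    apply Finset.sum_congr rfl; intro i _
    simp only [hw, smax]; ring
  have e2 : (∑ i, (Real.exp (b i) / ∑ j, Real.exp (b j)) * (w i - b i))
      = - ∑ i, smax b i * g i := by
    rw [← Finset.sum_neg_distrib]
    apply Finset.sum_congr rfl; intro i _
    simp only [hw, smax]; ring
  have e3 : (∑ i, (w i - b i)^2) = ∑ i, (g i)^2 := by
    apply Finset.sum_congr rfl; intro i _
    simp only [hw]; ring
  have e4 : (∑ i, smax b i * g i) - (∑ i, smax a i * g i) = ∑ i, (g i)^2 := by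
    rw [← Finset.sum_sub_distrib]
    apply Finset.sum_congr rfl; intro i _
    rw [hg]; ring
  rw [e1] at h1
  rw [e2, e3] at h2
  linarith

/-- Co-coercivity of softmax (inverse temperature 1), in coordinates. -/
lemma smax_cocoercive_sum {n : ℕ} (hn : 0 < n) (a b : Fin n → ℝ) :
    (∑ i, (smax b i - smax a i)^2) ≤ ∑ i, (smax b i - smax a i) * (b i - a i) := by
  have h1 := lse_bregman hn a b
  have h2 := lse_bregman hn b a
  have e0 : (∑ i, (smax a i - smax b i)^2) = ∑ i, (smax b i - smax a i)^2 := by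
    apply Finset.sum_congr rfl; intro i _; ring
  have e1 : (∑ i, smax a i * (b i - a i)) + (∑ i, smax b i * (a i - b i))
      = - ∑ i, (smax b i - smax a i) * (b i - a i) := by
    rw [← Finset.sum_add_distrib, ← Finset.sum_neg_distrib]
    apply Finset.sum_congr rfl; intro i _; ring
  rw [e0] at h2
  linarith

/-- The softmax function is `(1/λ)`-co-coercive with respect to the Euclidean
norm. -/
theorem softmax_cocoercive (n : ℕ) (hn : 1 ≤ n) (lam : ℝ) (hlam : 0 < lam)
    (z z' : EuclideanSpace ℝ (Fin n)) :
    (1 / lam) * ‖softmax lam z - softmax lam z'‖ ^ 2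
      ≤ ⟪softmax lam z - softmax lam z', z - z'⟫ := by
  have hn' : 0 < n := hn
  set A : Fin n → ℝ := fun i => lam * z i with hA
  set B : Fin n → ℝ := fun i => lam * z' i with hB
  have hd : ∀ i, (softmax lam z - softmax lam z') i = smax A i - smax B i := by
    intro i
    simp [softmax, smax, hA, hB]
  have hinner : ⟪softmax lam z - softmax lam z', z - z'⟫
      = ∑ i, (smax A i - smax B i) * (z i - z' i) := by
    rw [PiLp.inner_apply]
    apply Finset.sum_congr rfl; intro i _
    rw [hd i]
    simp [RCLike.inner_apply]; ring
  have hnorm : ‖softmax lam z - softmax lam z'‖ ^ 2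
      = ∑ i, (smax A i - smax B i)^2 := by
    rw [← real_inner_self_eq_norm_sq, PiLp.inner_apply]
    apply Finset.sum_congr rfl; intro i _
    rw [hd i]
    simp [RCLike.inner_apply]
  have key := smax_cocoercive_sum hn' B A
  have e1 : (∑ i, (smax A i - smax B i) * (A i - B i))
      = lam * ∑ i, (smax A i - smax B i) * (z i - z' i) := by
    rw [Finset.mul_sum]
    apply Finset.sum_congr rfl; intro i _
    simp only [hA, hB]; ring
  rw [e1] at key
  rw [hinner, hnorm, div_mul_eq_mul_div, one_mul, div_le_iff₀ hlam]
  linarith [key, mul_comm lam (∑ i, (smax A i - smax B i) * (z i - z' i))]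
end

section
/- For every λ > 0 and all z, z′ ∈ ℝⁿ, ⟨σ(z) − σ(z′), z − z′⟩ ≤ λ ‖z − z′‖₂². -/
open Real BigOperators
open scoped RealInnerProductSpace

lemma aux_core (x : ℝ) (hx : 0 ≤ x) : Real.exp x - 1 ≤ x * (Real.exp x + 1) / 2 := by
  have h : MonotoneOn (fun y : ℝ => y * (Real.exp y + 1) / 2 - Real.exp y + 1) (Set.Ici 0) := by
    apply monotoneOn_of_deriv_nonneg (convex_Ici 0)
    · fun_prop
    · intro y hy
      apply DifferentiableAt.differentiableWithinAt
      fun_prop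
    · intro y hy
      have hd : HasDerivAt (fun y : ℝ => y * (Real.exp y + 1) / 2 - Real.exp y + 1)
          ((1 * (Real.exp y + 1) + y * Real.exp y) / 2 - Real.exp y) y :=
        ((((hasDerivAt_id' (x := y)).mul ((Real.hasDerivAt_exp y).add_const 1)).div_const 2).sub
          (Real.hasDerivAt_exp y)).add_const 1
      rw [hd.deriv]
      have h1 : (1 - y) * Real.exp y ≤ 1 := by
        rcases le_or_gt y 1 with h | h
        · have h2 : (1 - y) * Real.exp y ≤ Real.exp (-y) * Real.exp y :=
            mul_le_mul_of_nonneg_right (by linarith [Real.add_one_le_exp (-y)]) (Real.exp_pos y).le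
          rw [← Real.exp_add] at h2
          simpa using h2
        · nlinarith [Real.exp_pos y]
      nlinarith
  have h0 := h (Set.self_mem_Ici) (Set.mem_Ici.mpr hx) hx
  simp at h0
  nlinarith [h0]

lemma aux_scalar (s t : ℝ) :
    (s - t) * (Real.exp s - Real.exp t) ≤ (s - t)^2 * (Real.exp s + Real.exp t) / 2 := by
  wlog h : t ≤ s with H
  · have := H t s (le_of_not_ge h)
    nlinarith [this]
  · have hx : 0 ≤ s - t := by linarith
    have hcore := aux_core (s - t) hx
    have he : Real.exp s = Real.exp t * Real.exp (s - t) := by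
      rw [← Real.exp_add]; ring_nf
    have ht := Real.exp_pos t
    have key := mul_le_mul_of_nonneg_left hcore (mul_nonneg hx ht.le)
    rw [he]
    nlinarith [key]

/-- `⟨σ(z) - σ(z'), z - z'⟩ ≤ λ ‖z - z'‖₂²`. -/
theorem softmax_inner_le (n : ℕ) (hn : 1 ≤ n) (lam : ℝ) (hlam : 0 < lam)
    (z z' : EuclideanSpace ℝ (Fin n)) :
    ⟪softmax lam z - softmax lam z', z - z'⟫ ≤ lam * ‖z - z'‖ ^ 2 := by
  have hne : Nonempty (Fin n) := ⟨⟨0, by omega⟩⟩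
  set A : Fin n → ℝ := fun i => Real.exp (lam * z i) with hA
  set B : Fin n → ℝ := fun i => Real.exp (lam * z' i) with hB
  set d : Fin n → ℝ := fun i => z i - z' i with hd
  set S : ℝ := ∑ j, A j with hS
  set T : ℝ := ∑ j, B j with hT
  have hApos : ∀ i, 0 < A i := fun i => Real.exp_pos _
  have hBpos : ∀ i, 0 < B i := fun i => Real.exp_pos _
  have hSpos : 0 < S := Finset.sum_pos (fun j _ => hApos j) Finset.univ_nonempty
  have hTpos : 0 < T := Finset.sum_pos (fun j _ => hBpos j) Finset.univ_nonempty
  -- Step 0: unfold inner product and norm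
  have hinner : ⟪softmax lam z - softmax lam z', z - z'⟫ =
      ∑ i, (A i / S - B i / T) * d i := by
    simp [softmax, PiLp.inner_apply, PiLp.sub_apply, hA, hB, hS, hT, hd]
    exact Finset.sum_congr rfl fun i _ => by ring
  have hnorm : ‖z - z'‖ ^ 2 = ∑ i, (d i)^2 := by
    rw [← real_inner_self_eq_norm_sq]
    simp only [PiLp.inner_apply, PiLp.sub_apply, hd, RCLike.inner_apply, conj_trivial, sq]
  -- product of sums helper
  have h1 : ∀ (u v : Fin n → ℝ), ∑ i, ∑ j, u i * v j = (∑ i, u i) * (∑ j, v j) := by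
    intro u v
    rw [Finset.sum_mul_sum]
  -- Step 1: key symmetrization identity
  have key : ∑ i, ∑ j, (d i - d j) * (A i * B j - A j * B i)
      = 2 * ((∑ i, d i * A i) * T - (∑ i, d i * B i) * S) := by
    have e1 : ((∑ i, ∑ j, (d i * A i) * B j) + ∑ i, ∑ j, (d j * A j) * B i)
          - ((∑ i, ∑ j, (d i * B i) * A j) + ∑ i, ∑ j, (d j * B j) * A i)
        = ∑ i, ∑ j, (d i - d j) * (A i * B j - A j * B i) := by
      rw [← Finset.sum_add_distrib, ← Finset.sum_add_distrib, ← Finset.sum_sub_distrib]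
      refine Finset.sum_congr rfl fun i _ => ?_
      rw [← Finset.sum_add_distrib, ← Finset.sum_add_distrib, ← Finset.sum_sub_distrib]
      exact Finset.sum_congr rfl fun j _ => by ring
    rw [← e1, Finset.sum_comm (f := fun i j => (d j * A j) * B i),
        Finset.sum_comm (f := fun i j => (d j * B j) * A i), h1, h1, ← hS, ← hT]
    ring
  have hX : ∑ i, (A i / S - B i / T) * d i
      = (1/(2*S*T)) * ∑ i, ∑ j, (d i - d j) * (A i * B j - A j * B i) := by
    rw [key]
    have e2 : ∑ i, (A i / S - B i / T) * d i
        = (∑ i, d i * A i) / S - (∑ i, d i * B i) / T := by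
      rw [Finset.sum_div, Finset.sum_div, ← Finset.sum_sub_distrib]
      exact Finset.sum_congr rfl fun i _ => by ring
    rw [e2]
    field_simp
  -- Step 2: per-term bound
  have step2 : ∑ i, ∑ j, (d i - d j) * (A i * B j - A j * B i)
      ≤ ∑ i, ∑ j, lam * (d i - d j)^2 * (A i * B j + A j * B i) / 2 := by
    refine Finset.sum_le_sum fun i _ => Finset.sum_le_sum fun j _ => ?_
    have hs := aux_scalar (lam * z i + lam * z' j) (lam * z j + lam * z' i)
    rw [Real.exp_add, Real.exp_add] at hs
    have hst : (lam * z i + lam * z' j) - (lam * z j + lam * z' i) = lam * (d i - d j) := by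
      rw [hd]; ring
    rw [hst] at hs
    have hgoal : lam * ((d i - d j) * (A i * B j - A j * B i))
        ≤ lam * (lam * (d i - d j)^2 * (A i * B j + A j * B i) / 2) := by
      rw [hA, hB]
      nlinarith [hs]
    exact le_of_mul_le_mul_left hgoal hlam
  -- Step 3: symmetrize the sum of the bound
  have step3 : ∑ i, ∑ j, lam * (d i - d j)^2 * (A i * B j + A j * B i) / 2
      = lam * ∑ i, ∑ j, (d i - d j)^2 * (A i * B j) := by
    have e3 : ∑ i, ∑ j, (d i - d j)^2 * (A j * B i)
        = ∑ i, ∑ j, (d i - d j)^2 * (A i * B j) := by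
      rw [Finset.sum_comm (f := fun i j => (d i - d j)^2 * (A j * B i))]
      refine Finset.sum_congr rfl fun i _ => Finset.sum_congr rfl fun j _ => by ring
    calc ∑ i, ∑ j, lam * (d i - d j)^2 * (A i * B j + A j * B i) / 2
        = (lam/2) * (∑ i, ∑ j, (d i - d j)^2 * (A i * B j)
            + ∑ i, ∑ j, (d i - d j)^2 * (A j * B i)) := by
          rw [← Finset.sum_add_distrib, Finset.mul_sum]
          refine Finset.sum_congr rfl fun i _ => ?_
          rw [← Finset.sum_add_distrib, Finset.mul_sum]
          refine Finset.sum_congr rfl fun j _ => by ring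
      _ = lam * ∑ i, ∑ j, (d i - d j)^2 * (A i * B j) := by rw [e3]; ring
  -- Step 4: pointwise bound (d i - d j)^2 ≤ 2 * ∑ d^2
  have step4 : ∑ i, ∑ j, (d i - d j)^2 * (A i * B j)
      ≤ ∑ i, ∑ j, (2 * ∑ k, (d k)^2) * (A i * B j) := by
    refine Finset.sum_le_sum fun i _ => Finset.sum_le_sum fun j _ => ?_
    refine mul_le_mul_of_nonneg_right ?_ (mul_pos (hApos i) (hBpos j)).le
    rcases eq_or_ne i j with rfl | hij
    · simp only [sub_self]
      have h0 : (0:ℝ) ≤ ∑ k, (d k)^2 := Finset.sum_nonneg fun k _ => sq_nonneg _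
      nlinarith
    · have hsub : d i ^ 2 + d j ^ 2 ≤ ∑ k, (d k)^2 := by
        have := Finset.sum_le_sum_of_subset_of_nonneg
          (Finset.subset_univ ({i, j} : Finset (Fin n))) (fun k _ _ => sq_nonneg (d k))
        rwa [Finset.sum_pair hij] at this
      nlinarith [sq_nonneg (d i + d j)]
  have step5 : ∑ i, ∑ j, (2 * ∑ k, (d k)^2) * (A i * B j) = (2 * ∑ k, (d k)^2) * (S * T) := by
    have : ∀ i j : Fin n, (2 * ∑ k, (d k)^2) * (A i * B j)
        = ((2 * ∑ k, (d k)^2) * A i) * B j := fun i j => by ring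
    simp_rw [this]
    rw [h1, ← Finset.mul_sum, ← hS, ← hT]
    ring
  -- Combine
  rw [hinner, hnorm, hX]
  have hS0 : S ≠ 0 := ne_of_gt hSpos
  have hT0 : T ≠ 0 := ne_of_gt hTpos
  have hpos : (0:ℝ) < 1/(2*S*T) := by
    apply div_pos one_pos
    nlinarith
  calc (1/(2*S*T)) * ∑ i, ∑ j, (d i - d j) * (A i * B j - A j * B i)
      ≤ (1/(2*S*T)) * (lam * ((2 * ∑ k, (d k)^2) * (S * T))) := by
        refine mul_le_mul_of_nonneg_left ?_ hpos.le
        calc ∑ i, ∑ j, (d i - d j) * (A i * B j - A j * B i)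
            ≤ ∑ i, ∑ j, lam * (d i - d j)^2 * (A i * B j + A j * B i) / 2 := step2
          _ = lam * ∑ i, ∑ j, (d i - d j)^2 * (A i * B j) := step3
          _ ≤ lam * ∑ i, ∑ j, (2 * ∑ k, (d k)^2) * (A i * B j) :=
              mul_le_mul_of_nonneg_left step4 hlam.le
          _ = lam * ((2 * ∑ k, (d k)^2) * (S * T)) := by rw [step5]
    _ = lam * ∑ i, (d i)^2 := by
        rw [one_div_mul_eq_div, div_eq_iff (mul_ne_zero (mul_ne_zero two_ne_zero hS0) hT0)]
        ring
end

section
/- For λ = 1, the softmax function is firmly nonexpansive: for all z, z′ ∈ ℝⁿ, ⟨σ(z) − σ(z′), z − z′⟩ ≥ ‖σ(z) − σ(z′)‖₂²; in particular it is nonexpansive, ‖σ(z) − σ(z′)‖₂ ≤ ‖z − z′‖₂. -/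
open Real BigOperators
open scoped RealInnerProductSpace

lemma key0 {a b : ℝ} (hb : 0 < b) (ha1 : a ≤ 1) (h : b ≤ a) :
    (a - b) ^ 2 ≤ (a - b) * (Real.log a - Real.log b) := by
  have ha : 0 < a := lt_of_lt_of_le hb h
  have h1 : Real.log (b / a) ≤ b / a - 1 := Real.log_le_sub_one_of_pos (div_pos hb ha)
  rw [Real.log_div hb.ne' ha.ne'] at h1
  have hab : 0 ≤ a - b := sub_nonneg.2 h
  have h2 : a * (Real.log b - Real.log a) ≤ b - a := by
    have h3 := mul_le_mul_of_nonneg_left h1 ha.le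
    calc a * (Real.log b - Real.log a) ≤ a * (b / a - 1) := h3
    _ = b - a := by field_simp
  have hX : (a - b) ^ 2 ≤ a * ((a - b) * (Real.log a - Real.log b)) := by
    nlinarith [mul_le_mul_of_nonneg_left h2 hab]
  have hXnn : 0 ≤ (a - b) * (Real.log a - Real.log b) := by
    nlinarith [sq_nonneg (a - b)]
  nlinarith [mul_nonneg (sub_nonneg.2 ha1) hXnn]

lemma key {a b : ℝ} (ha : 0 < a) (ha1 : a ≤ 1) (hb : 0 < b) (hb1 : b ≤ 1) :
    (a - b) ^ 2 ≤ (a - b) * (Real.log a - Real.log b) := by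
  rcases le_total b a with h | h
  · exact key0 hb ha1 h
  · have := key0 ha hb1 h
    nlinarith [this]

/-- For `λ = 1` the softmax function is firmly nonexpansive and, in
particular, nonexpansive. -/
theorem softmax_firmly_nonexpansive (n : ℕ) (hn : 1 ≤ n)
    (z z' : EuclideanSpace ℝ (Fin n)) :
    ‖softmax 1 z - softmax 1 z'‖ ^ 2 ≤ ⟪softmax 1 z - softmax 1 z', z - z'⟫ ∧
      ‖softmax 1 z - softmax 1 z'‖ ≤ ‖z - z'‖ := by
  have hne : Nonempty (Fin n) := Fin.pos_iff_nonempty.mp hn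
  set S : ℝ := ∑ j, Real.exp (z j) with hS
  set S' : ℝ := ∑ j, Real.exp (z' j) with hS'
  have hSpos : 0 < S := Finset.sum_pos (fun j _ => Real.exp_pos _) Finset.univ_nonempty
  have hS'pos : 0 < S' := Finset.sum_pos (fun j _ => Real.exp_pos _) Finset.univ_nonempty
  set p : Fin n → ℝ := fun i => Real.exp (z i) / S with hp
  set q : Fin n → ℝ := fun i => Real.exp (z' i) / S' with hq
  have hppos : ∀ i, 0 < p i := fun i => div_pos (Real.exp_pos _) hSpos
  have hqpos : ∀ i, 0 < q i := fun i => div_pos (Real.exp_pos _) hS'pos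
  have hple : ∀ i, p i ≤ 1 := fun i => (div_le_one hSpos).2
    (Finset.single_le_sum (f := fun j => Real.exp (z j))
      (fun j _ => (Real.exp_pos _).le) (Finset.mem_univ i))
  have hqle : ∀ i, q i ≤ 1 := fun i => (div_le_one hS'pos).2
    (Finset.single_le_sum (f := fun j => Real.exp (z' j))
      (fun j _ => (Real.exp_pos _).le) (Finset.mem_univ i))
  have hsump : ∑ i, p i = 1 := by
    rw [hp, ← Finset.sum_div]; exact div_self hSpos.ne'
  have hsumq : ∑ i, q i = 1 := by
    rw [hq, ← Finset.sum_div]; exact div_self hS'pos.ne'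
  have hlogp : ∀ i, Real.log (p i) = z i - Real.log S := by
    intro i; rw [hp]; rw [Real.log_div (Real.exp_pos _).ne' hSpos.ne', Real.log_exp]
  have hlogq : ∀ i, Real.log (q i) = z' i - Real.log S' := by
    intro i; rw [hq]; rw [Real.log_div (Real.exp_pos _).ne' hS'pos.ne', Real.log_exp]
  set d : EuclideanSpace ℝ (Fin n) := softmax 1 z - softmax 1 z' with hdd
  have hd : ∀ i, d i = p i - q i := by
    intro i
    simp [hdd, softmax, WithLp.equiv_symm_apply, hp, hq, hS, hS', one_mul]
  have hnorm : ‖d‖ ^ 2 = ∑ i, (p i - q i) ^ 2 := by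
    rw [← real_inner_self_eq_norm_sq, PiLp.inner_apply]
    exact Finset.sum_congr rfl (fun i _ => by rw [hd i]; simp [sq])
  have hinner : ⟪d, z - z'⟫ = ∑ i, (p i - q i) * (z i - z' i) := by
    rw [PiLp.inner_apply]
    exact Finset.sum_congr rfl (fun i _ => by
      rw [hd i]; simp [PiLp.sub_apply]; ring)
  have hexpand : ∑ i, (p i - q i) * (z i - z' i)
      = ∑ i, (p i - q i) * (Real.log (p i) - Real.log (q i)) := by
    have h1 : ∀ i ∈ Finset.univ, (p i - q i) * (z i - z' i)
        = (p i - q i) * (Real.log (p i) - Real.log (q i))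
          + (p i - q i) * (Real.log S - Real.log S') := by
      intro i _
      rw [hlogp i, hlogq i]; ring
    rw [Finset.sum_congr rfl h1, Finset.sum_add_distrib, ← Finset.sum_mul]
    have : ∑ i, (p i - q i) = 0 := by
      rw [Finset.sum_sub_distrib, hsump, hsumq]; ring
    rw [this]; ring
  have part1 : ‖d‖ ^ 2 ≤ ⟪d, z - z'⟫ := by
    rw [hnorm, hinner, hexpand]
    exact Finset.sum_le_sum (fun i _ => key (hppos i) (hple i) (hqpos i) (hqle i))
  refine ⟨part1, ?_⟩
  have hcs := real_inner_le_norm d (z - z')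
  nlinarith [norm_nonneg d, norm_nonneg (z - z')]
end

section
/- The softmax function is monotone plus: for every λ > 0 and all z, z′ ∈ ℝⁿ, if ⟨σ(z) − σ(z′), z − z′⟩ = 0 then σ(z) = σ(z′). -/
open Real BigOperators
open scoped RealInnerProductSpace

lemma aux_nonneg (a b : ℝ) (ha : 0 < a) (hb : 0 < b) :
    0 ≤ (a - b) * (Real.log a - Real.log b) := by
  rcases le_total a b with h | h
  · have hl : Real.log a ≤ Real.log b := Real.log_le_log ha h
    nlinarith
  · have hl : Real.log b ≤ Real.log a := Real.log_le_log hb h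
    nlinarith

lemma aux_eq (a b : ℝ) (ha : 0 < a) (hb : 0 < b)
    (h : (a - b) * (Real.log a - Real.log b) = 0) : a = b := by
  rcases lt_trichotomy a b with hlt | heq | hgt
  · have hl := Real.log_lt_log ha hlt
    nlinarith
  · exact heq
  · have hl := Real.log_lt_log hb hgt
    nlinarith

/-- The softmax function is monotone plus: it is monotone and
`⟨σ(z) - σ(z'), z - z'⟩ = 0` implies `σ(z) = σ(z')`. -/
theorem softmax_monotone_plus (n : ℕ) (hn : 1 ≤ n) (lam : ℝ) (hlam : 0 < lam)
    (z z' : EuclideanSpace ℝ (Fin n)) :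
    0 ≤ ⟪softmax lam z - softmax lam z', z - z'⟫ ∧
      (⟪softmax lam z - softmax lam z', z - z'⟫ = 0 → softmax lam z = softmax lam z') := by
  have hne : Nonempty (Fin n) := ⟨⟨0, hn⟩⟩
  set A := ∑ j, Real.exp (lam * z j) with hA
  set B := ∑ j, Real.exp (lam * z' j) with hB
  have hApos : 0 < A := Finset.sum_pos (fun i _ => Real.exp_pos _) Finset.univ_nonempty
  have hBpos : 0 < B := Finset.sum_pos (fun i _ => Real.exp_pos _) Finset.univ_nonempty
  set p : Fin n → ℝ := fun i => Real.exp (lam * z i) / A with hpdef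
  set q : Fin n → ℝ := fun i => Real.exp (lam * z' i) / B with hqdef
  have hp : ∀ i, 0 < p i := fun i => div_pos (Real.exp_pos _) hApos
  have hq : ∀ i, 0 < q i := fun i => div_pos (Real.exp_pos _) hBpos
  have hsump : ∑ i, p i = 1 := by
    rw [hpdef, ← Finset.sum_div]; exact div_self hApos.ne'
  have hsumq : ∑ i, q i = 1 := by
    rw [hqdef, ← Finset.sum_div]; exact div_self hBpos.ne'
  have hlogp : ∀ i, Real.log (p i) = lam * z i - Real.log A := fun i => by
    rw [hpdef]; simp only
    rw [Real.log_div (Real.exp_pos _).ne' hApos.ne', Real.log_exp]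
  have hlogq : ∀ i, Real.log (q i) = lam * z' i - Real.log B := fun i => by
    rw [hqdef]; simp only
    rw [Real.log_div (Real.exp_pos _).ne' hBpos.ne', Real.log_exp]
  have hinner : ⟪softmax lam z - softmax lam z', z - z'⟫ =
      ∑ i, (p i - q i) * (z i - z' i) := by
    simp [softmax, PiLp.inner_apply, RCLike.inner_apply, mul_comm, hpdef, hqdef, hA, hB]
  have hterm : ∀ i, (p i - q i) * (z i - z' i) =
      (1/lam) * ((p i - q i) * (Real.log (p i) - Real.log (q i)))
        + (1/lam) * (Real.log A - Real.log B) * (p i - q i) := by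
    intro i
    have key : Real.log (p i) - Real.log (q i) + (Real.log A - Real.log B) =
        lam * (z i - z' i) := by rw [hlogp i, hlogq i]; ring
    have h2 : (1/lam) * ((p i - q i) * (Real.log (p i) - Real.log (q i)))
        + (1/lam) * (Real.log A - Real.log B) * (p i - q i)
        = (1/lam) * ((p i - q i) * (lam * (z i - z' i))) := by
      rw [← key]; ring
    rw [h2]; field_simp
  have hS : ⟪softmax lam z - softmax lam z', z - z'⟫ =
      (1/lam) * ∑ i, (p i - q i) * (Real.log (p i) - Real.log (q i)) := by
    rw [hinner]
    calc ∑ i, (p i - q i) * (z i - z' i)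
        = ∑ i, ((1/lam) * ((p i - q i) * (Real.log (p i) - Real.log (q i)))
            + (1/lam) * (Real.log A - Real.log B) * (p i - q i)) := by
          exact Finset.sum_congr rfl fun i _ => hterm i
      _ = (1/lam) * ∑ i, (p i - q i) * (Real.log (p i) - Real.log (q i))
            + (1/lam) * (Real.log A - Real.log B) * ∑ i, (p i - q i) := by
          rw [Finset.sum_add_distrib, ← Finset.mul_sum, ← Finset.mul_sum]
      _ = (1/lam) * ∑ i, (p i - q i) * (Real.log (p i) - Real.log (q i)) := by
          rw [Finset.sum_sub_distrib, hsump, hsumq]; ring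
  have hTnn : 0 ≤ ∑ i, (p i - q i) * (Real.log (p i) - Real.log (q i)) :=
    Finset.sum_nonneg fun i _ => aux_nonneg _ _ (hp i) (hq i)
  constructor
  · rw [hS]; positivity
  · intro h0
    rw [hS] at h0
    have hT0 : ∑ i, (p i - q i) * (Real.log (p i) - Real.log (q i)) = 0 := by
      have : (1/lam) ≠ 0 := by positivity
      exact (mul_eq_zero.mp h0).resolve_left this
    have heach := (Finset.sum_eq_zero_iff_of_nonneg
      (fun i _ => aux_nonneg _ _ (hp i) (hq i))).mp hT0
    have hpq : ∀ i, p i = q i := fun i =>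
      aux_eq _ _ (hp i) (hq i) (heach i (Finset.mem_univ i))
    ext i
    simpa [softmax, hpdef, hqdef, hA, hB] using hpq i
end

section
/- Coordinate non-expansiveness of the standard softmax: for λ = 1, every z ∈ ℝⁿ, and indices i, j with z_j ≥ z_i, one has 0 ≤ σ_j(z) − σ_i(z) ≤ (1/2)(z_j − z_i). -/
open Real BigOperators
open scoped RealInnerProductSpace

lemma exp_sub_one_le_half_mul (t : ℝ) (ht : 0 ≤ t) :
    Real.exp t - 1 ≤ t / 2 * (Real.exp t + 1) := by
  set g : ℝ → ℝ := fun t => t / 2 * (Real.exp t + 1) - (Real.exp t - 1) with hg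
  have hderiv : ∀ x : ℝ, HasDerivAt g
      (1 / 2 * (Real.exp x + 1) + x / 2 * Real.exp x - Real.exp x) x := by
    intro x
    have h1 : HasDerivAt (fun t : ℝ => t / 2) (1 / 2) x := by
      simpa using (hasDerivAt_id x).div_const 2
    have h2 : HasDerivAt (fun t : ℝ => Real.exp t + 1) (Real.exp x) x := by
      simpa using (Real.hasDerivAt_exp x).add_const 1
    have h3 := h1.mul h2
    have h4 : HasDerivAt (fun t : ℝ => Real.exp t - 1) (Real.exp x) x := by
      simpa using (Real.hasDerivAt_exp x).sub_const 1
    exact h3.sub h4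
  have hmono : MonotoneOn g (Set.Ici (0 : ℝ)) := by
    apply monotoneOn_of_deriv_nonneg (convex_Ici 0)
      (Continuous.continuousOn (by fun_prop))
      (fun x _ => (hderiv x).differentiableAt.differentiableWithinAt)
    intro x hx
    rw [(hderiv x).deriv]
    have hx0 : (0:ℝ) ≤ x := le_of_lt (by simpa using hx)
    have h5 : 1 - x ≤ Real.exp (-x) := by
      linarith [Real.add_one_le_exp (-x)]
    have h6 : Real.exp (-x) * Real.exp x = 1 := by
      rw [← Real.exp_add]; simp
    have h7 : (0:ℝ) < Real.exp x := Real.exp_pos x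
    nlinarith [mul_le_mul_of_nonneg_right h5 h7.le]
  have h0 : g 0 ≤ g t := hmono (by simp) (by simpa using ht) ht
  have hz : g 0 = 0 := by simp [hg]
  rw [hz] at h0
  have hgt : g t = t / 2 * (Real.exp t + 1) - (Real.exp t - 1) := rfl
  rw [hgt] at h0
  linarith

/-- Coordinate non-expansiveness of the standard softmax (`λ = 1`): if
`z_j ≥ z_i` then `0 ≤ σ_j(z) - σ_i(z) ≤ (1/2) (z_j - z_i)`. -/
theorem softmax_coordinate_nonexpansive (n : ℕ) (hn : 1 ≤ n)
    (z : EuclideanSpace ℝ (Fin n)) (i j : Fin n) (hij : z i ≤ z j) :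
    0 ≤ softmax 1 z j - softmax 1 z i ∧
      softmax 1 z j - softmax 1 z i ≤ (1 / 2) * (z j - z i) := by
  have hS : (0:ℝ) < ∑ k, Real.exp (z k) := by
    apply Finset.sum_pos (fun k _ => Real.exp_pos _)
    have : Nonempty (Fin n) := Fin.pos_iff_nonempty.mp hn
    exact Finset.univ_nonempty
  have hsm : ∀ k, softmax 1 z k = Real.exp (z k) / ∑ m, Real.exp (z m) := by
    intro k; simp [softmax]
  have hdiff : softmax 1 z j - softmax 1 z i
      = (Real.exp (z j) - Real.exp (z i)) / ∑ k, Real.exp (z k) := by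
    rw [hsm, hsm, div_sub_div_same]
  have hnum : 0 ≤ Real.exp (z j) - Real.exp (z i) := by
    have := Real.exp_le_exp.mpr hij; linarith
  constructor
  · rw [hdiff]; positivity
  · rcases eq_or_ne i j with rfl | hne
    · simp
    · have hsub : ({i, j} : Finset (Fin n)) ⊆ Finset.univ := Finset.subset_univ _
      have hSS : Real.exp (z i) + Real.exp (z j) ≤ ∑ k, Real.exp (z k) := by
        have := Finset.sum_le_sum_of_subset_of_nonneg hsub
          (fun k _ _ => (Real.exp_pos (z k)).le)
        rwa [Finset.sum_pair hne] at this
      have hpair : (0:ℝ) < Real.exp (z i) + Real.exp (z j) := by positivity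
      have h1 : (Real.exp (z j) - Real.exp (z i)) / ∑ k, Real.exp (z k)
          ≤ (Real.exp (z j) - Real.exp (z i)) / (Real.exp (z i) + Real.exp (z j)) :=
        div_le_div_of_nonneg_left hnum hpair hSS |>.trans_eq rfl
      have ht : (0:ℝ) ≤ z j - z i := by linarith
      have hkey := exp_sub_one_le_half_mul (z j - z i) ht
      have hei : (0:ℝ) < Real.exp (z i) := Real.exp_pos _
      have hmul : Real.exp (z j) - Real.exp (z i)
          ≤ (z j - z i) / 2 * (Real.exp (z j) + Real.exp (z i)) := by
        have := mul_le_mul_of_nonneg_left hkey hei.le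
        have hexp : Real.exp (z i) * Real.exp (z j - z i) = Real.exp (z j) := by
          rw [← Real.exp_add]; ring_nf
        nlinarith [hexp]
      have h2 : (Real.exp (z j) - Real.exp (z i)) / (Real.exp (z i) + Real.exp (z j))
          ≤ (1 / 2) * (z j - z i) := by
        rw [div_le_iff₀ hpair]
        nlinarith [hmul]
      rw [hdiff]
      exact h1.trans h2
end

section
/- Lyapunov decrement for exponentially-discounted score dynamics in stable games: let λ > 0, let U: Δ^{n−1} → ℝⁿ be anti-monotone (i.e., ⟨x − x′, U(x) − U(x′)⟩ ≤ 0 for all x, x′ ∈ Δ^{n−1}), and let z̄* ∈ ℝⁿ satisfy the fixed-point condition z̄* = U(σ(z̄*)). Then for every z ∈ ℝⁿ, the derivative of the Bregman divergence V(z) = lse(z) − lse(z̄*) − ⟨σ(z̄*), z − z̄*⟩ along the vector field z ↦ U(σ(z)) − z satisfies ⟨σ(z) − σ(z̄*), U(σ(z)) − z⟩ ≤ −(1/λ) ‖σ(z) − σ(z̄*)‖₂². -/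
open Real BigOperators
open scoped RealInnerProductSpace

/-- The log-sum-exp function with inverse temperature `lam`. -/
noncomputable def lse {n : ℕ} (lam : ℝ) (z : EuclideanSpace ℝ (Fin n)) : ℝ :=
  lam⁻¹ * Real.log (∑ j, Real.exp (lam * z j))

/-- For `0 < q ≤ p ≤ 1`, `(p-q)² ≤ (p-q)(log p - log q)`. -/
lemma key_aux (p q : ℝ) (hp0 : 0 < p) (hp1 : p ≤ 1) (hq0 : 0 < q) (h : q ≤ p) :
    (p - q) ^ 2 ≤ (p - q) * (Real.log p - Real.log q) := by
  have h1 : Real.log q - Real.log p ≤ q / p - 1 := by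
    have := Real.log_le_sub_one_of_pos (show (0:ℝ) < q / p by positivity)
    rwa [Real.log_div hq0.ne' hp0.ne'] at this
  have h2 : (p - q) / p ≤ Real.log p - Real.log q := by
    have h' : (p - q) / p = 1 - q / p := by field_simp
    linarith [h' ▸ (by linarith : 1 - q/p ≤ Real.log p - Real.log q)]
  have h3 : p - q ≤ (p - q) / p := by
    rw [le_div_iff₀ hp0]; nlinarith
  nlinarith [sub_nonneg.2 h]

/-- For `p, q ∈ (0, 1]`, `(p-q)² ≤ (p-q)(log p - log q)`. -/
lemma key_pt (p q : ℝ) (hp0 : 0 < p) (hp1 : p ≤ 1) (hq0 : 0 < q) (hq1 : q ≤ 1) :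
    (p - q) ^ 2 ≤ (p - q) * (Real.log p - Real.log q) := by
  rcases le_total q p with h | h
  · exact key_aux p q hp0 hp1 hq0 h
  · nlinarith [key_aux q p hq0 hq1 hp0 h]

lemma softmax_apply {n : ℕ} (lam : ℝ) (z : EuclideanSpace ℝ (Fin n)) (i : Fin n) :
    softmax lam z i = Real.exp (lam * z i) / ∑ j, Real.exp (lam * z j) := rfl

/-- Basic facts about softmax: it lies in the interior of the simplex, and its
log is affine in `z`. -/
lemma softmax_facts {n : ℕ} (hn : 1 ≤ n) (lam : ℝ) (z : EuclideanSpace ℝ (Fin n)) :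
    (∑ i, softmax lam z i) = 1 ∧ (∀ i, 0 < softmax lam z i) ∧
      (∀ i, softmax lam z i ≤ 1) ∧
      (∀ i, Real.log (softmax lam z i)
        = lam * z i - Real.log (∑ j, Real.exp (lam * z j))) := by
  have hne : Nonempty (Fin n) := ⟨⟨0, hn⟩⟩
  have hS : 0 < ∑ j, Real.exp (lam * z j) :=
    Finset.sum_pos (fun _ _ => Real.exp_pos _) Finset.univ_nonempty
  refine ⟨?_, fun i => by simp [softmax_apply]; positivity, fun i => ?_, fun i => ?_⟩
  · simp only [softmax_apply]
    rw [← Finset.sum_div, div_self hS.ne']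
  · rw [softmax_apply, div_le_one hS]
    exact Finset.single_le_sum (f := fun j => Real.exp (lam * z j))
      (fun _ _ => (Real.exp_pos _).le) (Finset.mem_univ i)
  · rw [softmax_apply, Real.log_div (Real.exp_ne_zero _) hS.ne', Real.log_exp]

/-- Lyapunov decrement for exponentially-discounted score dynamics in stable
games: if the payoff `U` is anti-monotone on the simplex and `z̄*` is a fixed
point of `U ∘ σ`, then the derivative of the Bregman divergence generated by
`lse` along the vector field `z ↦ U(σ(z)) - z` satisfies
`⟨σ(z) - σ(z̄*), U(σ(z)) - z⟩ ≤ -(1/λ) ‖σ(z) - σ(z̄*)‖₂²`. -/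
theorem lyapunov_decrement_stable_game (n : ℕ) (hn : 1 ≤ n) (lam : ℝ) (hlam : 0 < lam)
    (U : EuclideanSpace ℝ (Fin n) → EuclideanSpace ℝ (Fin n))
    (hU : ∀ x x' : EuclideanSpace ℝ (Fin n),
      (∑ i, x i) = 1 → (∀ i, 0 ≤ x i) → (∑ i, x' i) = 1 → (∀ i, 0 ≤ x' i) →
        ⟪x - x', U x - U x'⟫ ≤ 0)
    (zbar : EuclideanSpace ℝ (Fin n)) (hzbar : zbar = U (softmax lam zbar))
    (z : EuclideanSpace ℝ (Fin n)) :
    ⟪softmax lam z - softmax lam zbar, U (softmax lam z) - z⟫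
      ≤ -(1 / lam) * ‖softmax lam z - softmax lam zbar‖ ^ 2 := by
  obtain ⟨hps, hpp, hp1, hpl⟩ := softmax_facts hn lam z
  obtain ⟨hqs, hqp, hq1, hql⟩ := softmax_facts hn lam zbar
  set p := softmax lam z with hp
  set q := softmax lam zbar with hq
  -- key sum inequality: symmetrized KL dominates the squared distance
  have hsum0 : ∑ i, (p i - q i) = 0 := by
    rw [Finset.sum_sub_distrib, hps, hqs]; ring
  have key : ∑ i, (p i - q i) ^ 2
      ≤ lam * ∑ i, (p i - q i) * (z i - zbar i) := by
    have h1 : ∑ i, (p i - q i) ^ 2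
        ≤ ∑ i, (p i - q i) * (Real.log (p i) - Real.log (q i)) :=
      Finset.sum_le_sum fun i _ => key_pt _ _ (hpp i) (hp1 i) (hqp i) (hq1 i)
    have h2 : ∑ i, (p i - q i) * (Real.log (p i) - Real.log (q i))
        = lam * ∑ i, (p i - q i) * (z i - zbar i) := by
      rw [Finset.mul_sum]
      have : ∀ i, (p i - q i) * (Real.log (p i) - Real.log (q i))
          = lam * ((p i - q i) * (z i - zbar i))
            - (p i - q i) * (Real.log (∑ j, Real.exp (lam * z j))
              - Real.log (∑ j, Real.exp (lam * zbar j))) := by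
        intro i; rw [hpl i, hql i]; ring
      rw [Finset.sum_congr rfl (fun i _ => this i), Finset.sum_sub_distrib,
        ← Finset.sum_mul, hsum0, zero_mul, sub_zero]
    linarith [h1.trans_eq h2]
  -- inner product computations
  have hinner : ⟪p - q, z - zbar⟫ = ∑ i, (p i - q i) * (z i - zbar i) := by
    simp [PiLp.inner_apply, RCLike.inner_apply]
    exact Finset.sum_congr rfl (fun i _ => mul_comm _ _)
  have hnorm : ‖p - q‖ ^ 2 = ∑ i, (p i - q i) ^ 2 := by
    rw [← real_inner_self_eq_norm_sq]
    simp [PiLp.inner_apply, RCLike.inner_apply, sq]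
    rw [← sq, EuclideanSpace.norm_eq, Real.sq_sqrt (by positivity)]
    simp [sq]
  have hmono : (1 / lam) * ‖p - q‖ ^ 2 ≤ ⟪p - q, z - zbar⟫ := by
    rw [hinner, hnorm, div_mul_eq_mul_div, one_mul, div_le_iff₀' hlam]; exact key
  have hanti : ⟪p - q, U p - U q⟫ ≤ 0 :=
    hU p q hps (fun i => (hpp i).le) hqs (fun i => (hqp i).le)
  have hdecomp : ⟪p - q, U p - z⟫
      = ⟪p - q, U p - U q⟫ - ⟪p - q, z - zbar⟫ := by
    rw [← inner_sub_right]
    congr 1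
    rw [hzbar]
    abel
  rw [hdecomp]
  linarith [hanti, hmono]
end
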